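/- arXiv:1710.06087 — 8 statements merged into one kernel-verified Lean document; each statement's English description precedes it below -/
import Mathlib

section
/- Let $(C_n)_{n\in\omega}$ be a sequence of pairwise disjoint finite nonempty subsets of $\omega$, let $\mathcal{G} = \{g \in \omega^\omega : \forall n,\ g(n) \in C_n\}$, and let $p$ be a free ultrafilter on $\omega$. Then the set $Z_p = \{p\text{-}\lim g : g \in \mathcal{G}\}$ is a discrete subspace of $\beta\omega$. -/
open Filter Topology Function

/-!
In `βℕ` the `p`-limit of `g` is the image ultrafilter `p.map g`, which contains `range g`. If `g'`
is another selector with `range g ∈ p.map g'`, then for `p`-almost every `n` the point `g' n ∈ C n`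
equals some `g m ∈ C m`, so `m = n` by disjointness; hence `g' = g` on a set in `p` and
`p.map g' = p.map g`. Thus the clopen set `{u | range g ∈ u}` isolates `p.map g` in `Z_p`.
-/

namespace Ultrafilter

variable {α β : Type*}

theorem tendsto_pure_comp_nhds_map (f : Ultrafilter α) (g : α → β) :
    Tendsto (fun a => (pure (g a) : Ultrafilter β)) f (𝓝 (f.map g)) :=
  (tendsto_pure_self (f.map g)).comp (by rw [coe_map]; exact tendsto_map)

theorem tendsto_pure_comp_nhds_iff {f : Ultrafilter α} {g : α → β} {x : Ultrafilter β} :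
    Tendsto (fun a => (pure (g a) : Ultrafilter β)) f (𝓝 x) ↔ f.map g = x :=
  ⟨fun h => tendsto_nhds_unique (tendsto_pure_comp_nhds_map f g) h,
    fun h => h ▸ tendsto_pure_comp_nhds_map f g⟩

theorem range_mem_map (f : Ultrafilter α) (g : α → β) : Set.range g ∈ f.map g := by
  rw [mem_map, Set.preimage_range]
  exact (f : Filter α).univ_mem

end Ultrafilter

section Selectors

variable {ι β : Type*} {C : ι → Set β} {g g' : ι → β}

theorem eq_of_mem_range_of_pairwise_disjoint (hdisj : Pairwise (Disjoint on C))
    (hg : ∀ i, g i ∈ C i) (hg' : ∀ i, g' i ∈ C i) {i : ι} (hi : g' i ∈ Set.range g) :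
    g' i = g i := by
  obtain ⟨j, hj⟩ := hi
  obtain rfl : j = i := by
    by_contra hji
    exact Set.disjoint_left.mp (hdisj hji) (hg j) (hj ▸ hg' i)
  exact hj.symm

theorem Ultrafilter.map_eq_of_range_mem_map (hdisj : Pairwise (Disjoint on C))
    (hg : ∀ i, g i ∈ C i) (hg' : ∀ i, g' i ∈ C i) {f : Ultrafilter ι}
    (h : Set.range g ∈ f.map g') : f.map g' = f.map g := by
  have hfg : g' =ᶠ[f] g := by
    filter_upwards [Ultrafilter.mem_map.mp h] with i hi
    exact eq_of_mem_range_of_pairwise_disjoint hdisj hg hg' hi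
  exact Ultrafilter.coe_injective (by simp only [Ultrafilter.coe_map, Filter.map_congr hfg])

end Selectors

theorem stmt0_general (C : ℕ → Set ℕ)
    (hdisj : ∀ m n, m ≠ n → Disjoint (C m) (C n))
    (p : Ultrafilter ℕ) :
    DiscreteTopology {x : Ultrafilter ℕ // ∃ g : ℕ → ℕ, (∀ n, g n ∈ C n) ∧
      Tendsto (fun n => (pure (g n) : Ultrafilter ℕ)) ↑p (𝓝 x)} := by
  rw [discreteTopology_iff_isOpen_singleton]
  rintro ⟨x, g, hg, hgx⟩
  obtain rfl := Ultrafilter.tendsto_pure_comp_nhds_iff.mp hgx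
  convert (ultrafilter_isOpen_basic (Set.range g)).preimage continuous_subtype_val
  ext ⟨y, g', hg', hgy⟩
  obtain rfl := Ultrafilter.tendsto_pure_comp_nhds_iff.mp hgy
  simp only [Set.mem_singleton_iff, Set.mem_preimage, Set.mem_ofPred_eq, Subtype.mk.injEq]
  refine ⟨fun h => h ▸ Ultrafilter.range_mem_map p g, ?_⟩
  exact Ultrafilter.map_eq_of_range_mem_map (fun m n hmn => hdisj m n hmn) hg hg'

/-- If `(C n)` is a sequence of pairwise disjoint finite nonempty subsets of `ω`,
`𝒢 = {g : ∀ n, g n ∈ C n}` and `p` is a free ultrafilter on `ω`, then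
`Z_p = {p-lim g : g ∈ 𝒢}` is a discrete subspace of `βω` (the space of ultrafilters on `ℕ`). -/
theorem stmt0 (C : ℕ → Set ℕ) (hfin : ∀ n, (C n).Finite)
    (hne : ∀ n, (C n).Nonempty)
    (hdisj : ∀ m n, m ≠ n → Disjoint (C m) (C n))
    (p : Ultrafilter ℕ) (hp : ∀ a, p ≠ pure a) :
    DiscreteTopology {x : Ultrafilter ℕ // ∃ g : ℕ → ℕ, (∀ n, g n ∈ C n) ∧
      Tendsto (fun n => (pure (g n) : Ultrafilter ℕ)) ↑p (𝓝 x)} :=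
  stmt0_general C hdisj p
end

section
/- Let $(C_n)_{n\in\omega}$ be a sequence of pairwise disjoint finite nonempty subsets of $\omega$ with $|C_n| \le |C_{n+1}|$ for all $n$ and $|C_n| \to \infty$, let $\mathcal{G} = \{g \in \omega^\omega : \forall n,\ g(n) \in C_n\}$, and let $p$ be a free ultrafilter on $\omega$. Then the set $Z_p = \{p\text{-}\lim g : g \in \mathcal{G}\}$ has cardinality $\mathfrak{c} = 2^{\aleph_0}$. -/
open Filter Topology Function

/-!
The `p`-limit of `n ↦ g n` is `p.map g`, so `Z_p` is the image of `𝒢` under `g ↦ p.map g`,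
which bounds it by `|ℕ → ℕ| = 𝔠`. Conversely, `C n` contains a copy of `{0,1}^{k n}` with
`k n = ⌊log₂ |C n|⌋ → ∞`. For `A : ℕ → Bool` let `g_A n` be the code of `A ↾ k n` in `C n`.
Since the blocks are disjoint, `A ↾ k n` can be read back from the single point `g_A n`, and
these restrictions converge to `A` along the free ultrafilter `p`; hence `A` is determined
by `p.map g_A`.
-/

theorem Ultrafilter.tendsto_pure_comp_iff {α β : Type*} (p : Ultrafilter α) (g : α → β)
    (x : Ultrafilter β) : Tendsto (fun a => pure (g a)) p (𝓝 x) ↔ p.map g = x := by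
  have hmap : Tendsto (fun a => pure (g a)) p (𝓝 (p.map g)) :=
    (Ultrafilter.tendsto_pure_self _).comp (by rw [Ultrafilter.coe_map]; exact tendsto_map)
  exact ⟨fun h => tendsto_nhds_unique hmap h, fun h => h ▸ hmap⟩

theorem Ultrafilter.le_atTop_of_ne_pure (p : Ultrafilter ℕ) (hp : ∀ a, p ≠ pure a) :
    (p : Filter ℕ) ≤ atTop := by
  rw [← Nat.cofinite_eq_atTop]
  exact p.le_cofinite_or_eq_pure.resolve_right fun ⟨a, ha⟩ => hp a ha

theorem Ultrafilter.injective_map_of_tendsto {α X Y : Type*} [TopologicalSpace Y] [T2Space Y]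
    (p : Ultrafilter α) (dec : X → Y) (g : Y → α → X) (h : ∀ y, Tendsto (dec ∘ g y) p (𝓝 y)) :
    Injective fun y => p.map (g y) := by
  intro y z hyz
  have hy : Tendsto dec (p.map (g y)) (𝓝 y) := by rw [Ultrafilter.coe_map]; exact h y
  have hz : Tendsto dec (p.map (g z)) (𝓝 z) := by rw [Ultrafilter.coe_map]; exact h z
  rw [show p.map (g y) = p.map (g z) from hyz] at hy
  exact tendsto_nhds_unique hy hz

theorem Set.exists_injective_fin_bool_of_two_pow_le {X : Type*} {s : Set X} {k : ℕ}
    (h : 2 ^ k ≤ s.ncard) : ∃ e : (Fin k → Bool) → X, Injective e ∧ ∀ f, e f ∈ s := by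
  have hs : s.Finite := Set.finite_of_ncard_pos (lt_of_lt_of_le (by positivity) h)
  have := hs.fintype
  obtain ⟨e⟩ := Function.Embedding.nonempty_of_card_le (α := Fin k → Bool) (β := s)
    (by rwa [Fintype.card_fun, Fintype.card_bool, Fintype.card_fin, ← Nat.card_eq_fintype_card,
      Nat.card_coe_set_eq])
  exact ⟨fun f => e f, Subtype.val_injective.comp e.injective, fun f => (e f).2⟩

theorem Nat.tendsto_log_atTop {b : ℕ} (hb : 1 < b) : Tendsto (Nat.log b) atTop atTop :=
  Nat.log_monotone.tendsto_atTop_atTop fun k => ⟨b ^ k, (Nat.log_pow hb k).ge⟩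

theorem Set.Nonempty.exists_injective_fin_log_two_ncard {X : Type*} {s : Set X}
    (hs : s.Nonempty) :
    ∃ e : (Fin (Nat.log 2 s.ncard) → Bool) → X, Injective e ∧ ∀ f, e f ∈ s := by
  rcases Nat.eq_zero_or_pos s.ncard with h0 | hpos
  · -- `s` is infinite, where `ncard` takes the junk value `0`; `Fin 0 → Bool` is a singleton.
    obtain ⟨x, hx⟩ := hs
    rw [h0, Nat.log_zero_right]
    exact ⟨fun _ => x, fun f f' _ => Subsingleton.elim f f', fun _ => hx⟩
  · exact exists_injective_fin_bool_of_two_pow_le (Nat.pow_log_le_self 2 hpos.ne')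

def Fin.extendFalse {k : ℕ} (f : Fin k → Bool) (i : ℕ) : Bool :=
  if h : i < k then f ⟨i, h⟩ else false

theorem Fin.extendFalse_restrict {k i : ℕ} (A : ℕ → Bool) (h : i < k) :
    Fin.extendFalse (fun j : Fin k => A j) i = A i := by
  simp [Fin.extendFalse, h]

section BlockCode

variable {X : Type*} {k : ℕ → ℕ} (e : ∀ n, (Fin (k n) → Bool) → X)

def blockCode (c : Σ n, Fin (k n) → Bool) : X := e c.1 c.2

theorem blockCode_injective {S : ℕ → Set X} (hS : Pairwise (Disjoint on S))
    (he : ∀ n, Injective (e n)) (heS : ∀ n f, e n f ∈ S n) : Injective (blockCode e) := by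
  rintro ⟨m, f⟩ ⟨n, f'⟩ (h : e m f = e n f')
  obtain rfl : m = n := hS.eq (Set.not_disjoint_iff.2 ⟨_, heS m f, h ▸ heS n f'⟩)
  rw [he m h]

noncomputable def blockDecode (x : X) : ℕ → Bool :=
  have : Nonempty (Σ n, Fin (k n) → Bool) := ⟨⟨0, fun _ => false⟩⟩
  Fin.extendFalse (invFun (blockCode e) x).2

theorem blockDecode_apply {S : ℕ → Set X} (hS : Pairwise (Disjoint on S))
    (he : ∀ n, Injective (e n)) (heS : ∀ n f, e n f ∈ S n) (n : ℕ) (f : Fin (k n) → Bool) :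
    blockDecode e (e n f) = Fin.extendFalse f := by
  rw [blockDecode, show e n f = blockCode e ⟨n, f⟩ from rfl,
    leftInverse_invFun (blockCode_injective e hS he heS)]

theorem tendsto_blockDecode {S : ℕ → Set X} (hS : Pairwise (Disjoint on S))
    (he : ∀ n, Injective (e n)) (heS : ∀ n f, e n f ∈ S n) (hk : Tendsto k atTop atTop)
    (A : ℕ → Bool) :
    Tendsto (fun n => blockDecode e (e n fun i => A i)) atTop (𝓝 A) := by
  refine tendsto_pi_nhds.2 fun i => tendsto_const_nhds.congr' ?_
  filter_upwards [hk.eventually_gt_atTop i] with n hn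
  rw [blockDecode_apply e hS he heS, Fin.extendFalse_restrict A hn]

end BlockCode

theorem stmt1_general (C : ℕ → Set ℕ)
    (hne : ∀ n, (C n).Nonempty)
    (hdisj : ∀ m n, m ≠ n → Disjoint (C m) (C n))
    (hlim : Tendsto (fun n => (C n).ncard) atTop atTop)
    (p : Ultrafilter ℕ) (hp : ∀ a, p ≠ pure a) :
    Cardinal.mk {x : Ultrafilter ℕ // ∃ g : ℕ → ℕ, (∀ n, g n ∈ C n) ∧
      Tendsto (fun n => (pure (g n) : Ultrafilter ℕ)) ↑p (𝓝 x)} = Cardinal.continuum := by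
  set G : Set (ℕ → ℕ) := {g | ∀ n, g n ∈ C n}
  have hZ : {x : Ultrafilter ℕ | ∃ g : ℕ → ℕ, (∀ n, g n ∈ C n) ∧
      Tendsto (fun n => (pure (g n) : Ultrafilter ℕ)) ↑p (𝓝 x)} = (fun g => p.map g) '' G := by
    ext x
    simp only [Ultrafilter.tendsto_pure_comp_iff]
    rfl
  change Cardinal.mk ↥{x : Ultrafilter ℕ | _} = _
  rw [hZ]
  choose e he heC using fun n => (hne n).exists_injective_fin_log_two_ncard
  have hk : Tendsto (fun n => Nat.log 2 (C n).ncard) atTop atTop :=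
    (Nat.tendsto_log_atTop one_lt_two).comp hlim
  have hcode : Injective fun A : ℕ → Bool => p.map fun n => e n fun i => A i :=
    p.injective_map_of_tendsto (blockDecode e) _ fun A =>
      (tendsto_blockDecode e hdisj he heC hk A).mono_left (p.le_atTop_of_ne_pure hp)
  refine le_antisymm ?_ ?_
  · calc Cardinal.mk ((fun g => p.map g) '' G) ≤ Cardinal.mk G := Cardinal.mk_image_le
      _ ≤ Cardinal.mk (ℕ → ℕ) := Cardinal.mk_set_le G
      _ = Cardinal.continuum := by simp
  · calc Cardinal.continuum = Cardinal.mk (ℕ → Bool) := by simp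
      _ = Cardinal.mk (Set.range fun A : ℕ → Bool => p.map fun n => e n fun i => A i) :=
        (Cardinal.mk_range_eq _ hcode).symm
      _ ≤ Cardinal.mk ((fun g => p.map g) '' G) :=
        Cardinal.mk_le_mk_of_subset (Set.range_subset_iff.2 fun A =>
          Set.mem_image_of_mem _ fun n => heC n _)

/-- If moreover `|C n| ≤ |C (n+1)|` and `|C n| → ∞`, then `Z_p` has
cardinality continuum. -/
theorem stmt1 (C : ℕ → Set ℕ) (hfin : ∀ n, (C n).Finite)
    (hne : ∀ n, (C n).Nonempty)
    (hdisj : ∀ m n, m ≠ n → Disjoint (C m) (C n))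
    (hmono : ∀ n, (C n).ncard ≤ (C (n+1)).ncard)
    (hlim : Tendsto (fun n => (C n).ncard) atTop atTop)
    (p : Ultrafilter ℕ) (hp : ∀ a, p ≠ pure a) :
    Cardinal.mk {x : Ultrafilter ℕ // ∃ g : ℕ → ℕ, (∀ n, g n ∈ C n) ∧
      Tendsto (fun n => (pure (g n) : Ultrafilter ℕ)) ↑p (𝓝 x)} = Cardinal.continuum :=
  stmt1_general C hne hdisj hlim p hp
end

section
/- Let $(A_n)_{n\in\omega}$ be any sequence of finite subsets of $\omega$ and let $Y$ be an infinite subset of $\omega$. Then there exists an infinite set $X \subseteq Y$ and sequences $(U_n)$, $(D_n)$ of finite subsets of $\omega$ such that $(U_n)_{n \in X}$ is increasing under inclusion (as indexed along increasing elements of $X$), the sets $(D_n)_{n \in X}$ are pairwise disjoint, and for every $n \in X$, $U_n \cap D_n = \emptyset$ and $A_n = U_n \cup D_n$. -/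
/-- Every sequence `(A n)` of finite subsets of `ω` admits a nice dissection
over an infinite subset `X` of any given infinite `Y ⊆ ω`: there are `(U n)`, `(D n)`
finite, with `U` increasing along `X`, the `D n` (`n ∈ X`) pairwise disjoint, and for
`n ∈ X`, `U n ∩ D n = ∅` and `A n = U n ∪ D n`. -/
theorem stmt3 (A : ℕ → Set ℕ) (hfin : ∀ n, (A n).Finite)
    (Y : Set ℕ) (hY : Y.Infinite) :
    ∃ X : Set ℕ, X.Infinite ∧ X ⊆ Y ∧
      ∃ U D : ℕ → Set ℕ,
        (∀ n, (U n).Finite ∧ (D n).Finite) ∧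
        (∀ m ∈ X, ∀ n ∈ X, m ≤ n → U m ⊆ U n) ∧
        (∀ m ∈ X, ∀ n ∈ X, m ≠ n → Disjoint (D m) (D n)) ∧
        (∀ n ∈ X, Disjoint (U n) (D n) ∧ A n = U n ∪ D n) := by
  classical
  -- A nonprincipal ultrafilter containing Y
  have hNe : (Filter.cofinite ⊓ Filter.principal Y).NeBot := by
    rw [Filter.inf_principal_neBot_iff]
    intro U hU
    have h := (hY.diff (by simpa [Filter.mem_cofinite] using hU)).nonempty
    rw [Set.diff_compl, Set.inter_comm] at h; exact h
  set 𝒰 : Ultrafilter ℕ := Ultrafilter.of (Filter.cofinite ⊓ Filter.principal Y) with h𝒰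
  have hle : (𝒰 : Filter ℕ) ≤ Filter.cofinite ⊓ Filter.principal Y := Ultrafilter.of_le _
  have hcof : ∀ s : Set ℕ, sᶜ.Finite → s ∈ 𝒰 := fun s hs =>
    (hle.trans inf_le_left) hs
  have hYmem : Y ∈ 𝒰 := (hle.trans inf_le_right) (Filter.mem_principal_self Y)
  -- the "root" set
  set R : Set ℕ := {k | {n | k ∈ A n} ∈ 𝒰} with hR
  -- the set of good next choices given a finite set of already chosen indices
  set T : Finset ℕ → Set ℕ := fun s =>
    {x | x ∈ Y ∧ (∀ j ∈ s, j < x) ∧ (∀ j ∈ s, ∀ k ∈ A j, k ∈ R → k ∈ A x) ∧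
      (∀ j ∈ s, ∀ k ∈ A j, k ∉ R → k ∉ A x)} with hTdef
  have hT : ∀ s : Finset ℕ, T s ∈ 𝒰 := by
    intro s
    have h1 : {x | ∀ j ∈ s, j < x} ∈ 𝒰 := by
      rw [show {x | ∀ j ∈ s, j < x} = ⋂ j ∈ s, {x | j < x} by ext x; simp]
      exact (Filter.biInter_finset_mem _).mpr fun j _ =>
        hcof _ (by
          have : {x | j < x}ᶜ = Set.Iic j := by ext x; simp [Nat.not_lt]
          rw [this]; exact Set.finite_Iic j)
    have h2 : {x | ∀ j ∈ s, ∀ k ∈ A j, k ∈ R → k ∈ A x} ∈ 𝒰 := by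
      rw [show {x | ∀ j ∈ s, ∀ k ∈ A j, k ∈ R → k ∈ A x}
          = ⋂ j ∈ s, ⋂ k ∈ A j ∩ R, {x | k ∈ A x} by ext x; simp [Set.mem_inter_iff]; tauto]
      refine (Filter.biInter_finset_mem _).mpr fun j _ => ?_
      refine (Filter.biInter_mem ((hfin j).inter_of_left R)).mpr fun k hk => ?_
      exact hk.2
    have h3 : {x | ∀ j ∈ s, ∀ k ∈ A j, k ∉ R → k ∉ A x} ∈ 𝒰 := by
      rw [show {x | ∀ j ∈ s, ∀ k ∈ A j, k ∉ R → k ∉ A x}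
          = ⋂ j ∈ s, ⋂ k ∈ A j \ R, {x | k ∉ A x} by ext x; simp [Set.mem_diff]; tauto]
      refine (Filter.biInter_finset_mem _).mpr fun j _ => ?_
      refine (Filter.biInter_mem ((hfin j).subset Set.diff_subset)).mpr fun k hk => ?_
      have h' : {n | k ∈ A n}ᶜ ∈ 𝒰 := Ultrafilter.compl_mem_iff_notMem.mpr hk.2
      have he : {x | k ∉ A x} = {n | k ∈ A n}ᶜ := rfl
      rw [he]; exact h'
    have : Y ∩ ({x | ∀ j ∈ s, j < x} ∩ ({x | ∀ j ∈ s, ∀ k ∈ A j, k ∈ R → k ∈ A x} ∩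
        {x | ∀ j ∈ s, ∀ k ∈ A j, k ∉ R → k ∉ A x})) ∈ 𝒰 :=
      Filter.inter_mem hYmem (Filter.inter_mem h1 (Filter.inter_mem h2 h3))
    refine Filter.mem_of_superset this ?_
    rintro x ⟨hx1, hx2, hx3, hx4⟩
    exact ⟨hx1, hx2, hx3, hx4⟩
  have hTne : ∀ s, (T s).Nonempty := fun s => (𝒰 : Filter ℕ).nonempty_of_mem (hT s)
  set pick : Finset ℕ → ℕ := fun s => (hTne s).choose with hpickdef
  have hpick : ∀ s, pick s ∈ T s := fun s => (hTne s).choose_spec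
  -- recursive construction
  set g : ℕ → Finset ℕ := fun n => Nat.rec (∅ : Finset ℕ) (fun _ s => insert (pick s) s) n
    with hgdef
  set f : ℕ → ℕ := fun n => pick (g n) with hfdef
  have hgsucc : ∀ n, g (n + 1) = insert (f n) (g n) := fun n => rfl
  have hgsub : ∀ m n, m ≤ n → g m ⊆ g n := by
    intro m n h
    induction n with
    | zero => simp [Nat.le_zero.mp h]
    | succ n ih =>
      rcases Nat.lt_or_ge m (n + 1) with h' | h'
      · exact (ih (Nat.lt_succ_iff.mp h')).trans (by rw [hgsucc]; exact Finset.subset_insert _ _)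
      · have : m = n + 1 := le_antisymm h h'
        subst this; exact Finset.Subset.refl _
  have hmemg : ∀ m n, m < n → f m ∈ g n := by
    intro m n h
    have : f m ∈ g (m + 1) := by rw [hgsucc]; exact Finset.mem_insert_self _ _
    exact hgsub _ _ h this
  have hfT : ∀ n, f n ∈ T (g n) := fun n => hpick (g n)
  have hmono : StrictMono f := by
    apply strictMono_nat_of_lt_succ
    intro n
    exact (hfT (n + 1)).2.1 (f n) (hmemg n (n + 1) (Nat.lt_succ_self n))
  refine ⟨Set.range f, Set.infinite_range_of_injective hmono.injective, ?_,
    fun n => A n ∩ R, fun n => A n \ R, ?_, ?_, ?_, ?_⟩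
  · rintro x ⟨n, rfl⟩; exact (hfT n).1
  · exact fun n => ⟨(hfin n).inter_of_left R, (hfin n).subset Set.diff_subset⟩
  · rintro m ⟨i, rfl⟩ n ⟨j, rfl⟩ hle'
    rcases eq_or_lt_of_le (hmono.le_iff_le.mp hle') with h | h
    · subst h; exact subset_rfl
    · rintro k ⟨hkA, hkR⟩
      exact ⟨(hfT j).2.2.1 (f i) (hmemg i j h) k hkA hkR, hkR⟩
  · rintro m ⟨i, rfl⟩ n ⟨j, rfl⟩ hne
    have key : ∀ i j, i < j → Disjoint (A (f i) \ R) (A (f j) \ R) := by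
      intro i j h
      rw [Set.disjoint_left]
      rintro k ⟨hkA, hkR⟩ ⟨hkA', _⟩
      exact (hfT j).2.2.2 (f i) (hmemg i j h) k hkA hkR hkA'
    rcases lt_or_gt_of_ne (fun h => hne (congrArg f h) : i ≠ j) with h | h
    · exact key i j h
    · exact (key j i h).symm
  · rintro n ⟨i, rfl⟩
    refine ⟨?_, (Set.inter_union_diff (A (f i)) R).symm⟩
    rw [Set.disjoint_left]
    rintro k ⟨_, hkR⟩ ⟨_, hkR'⟩
    exact hkR' hkR
end

section
/- Let $\mathcal{B} \subseteq \omega^\omega$ be an unbounded family (with respect to eventual domination $<^*$) consisting of strictly increasing functions, and let $(C_n)_{n \in \omega}$ be a sequence of pairwise disjoint finite nonempty subsets of $\omega$. Then there exists $g \in \mathcal{B}$ and an infinite set $E \subseteq \omega$ such that $g[\omega] \cap \bigcup_{n \in E} C_n = \emptyset$. -/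
/-!
Cut `ω` into consecutive blocks `[a i, a (i + 1))` such that each block contains a whole `C (idx i)`;
this is possible because disjoint sets cannot all meet a fixed finite initial segment.
By unboundedness some `g ∈ ℬ` satisfies `a (2 m) ≤ g m` for infinitely many `m`. For such `m`, only the
`m` values `g 0, …, g (m - 1)` can land in the first `2 m` blocks, so at least `m` of these blocks are
missed by `g`. Hence `g` misses infinitely many blocks, and `E` collects the indices `idx i` of the
missed blocks.
-/

open Filter Function Set

lemma exists_subset_Ici_of_pairwise_disjoint {ι : Type*} [Infinite ι] {C : ι → Set ℕ}
    (hdisj : Pairwise (Disjoint on C)) (b : ℕ) : ∃ i, C i ⊆ Ici b := by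
  by_contra! h
  simp only [not_subset, mem_Ici, not_le] at h
  choose x hxC hxb using h
  have hinj : Injective fun i => (⟨x i, hxb i⟩ : Fin b) := fun i j hij =>
    hdisj.eq (not_disjoint_iff.2 ⟨x i, hxC i, by rw [Fin.mk.inj hij]; exact hxC j⟩)
  have := Finite.of_injective _ hinj
  exact _root_.not_finite ι

lemma exists_strictMono_subset_Ico {C : ℕ → Set ℕ} (hfin : ∀ n, (C n).Finite)
    (hdisj : Pairwise (Disjoint on C)) :
    ∃ a : ℕ → ℕ, StrictMono a ∧ ∃ idx : ℕ → ℕ, ∀ i, C (idx i) ⊆ Ico (a i) (a (i + 1)) := by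
  choose pick hpick using exists_subset_Ici_of_pairwise_disjoint hdisj
  choose M hM using fun n => (hfin n).bddAbove
  let a : ℕ → ℕ := fun i => Nat.rec 0 (fun _ ai => ai + M (pick ai) + 1) i
  refine ⟨a, strictMono_nat_of_lt_succ fun i => ?_, fun i => pick (a i),
    fun i x hx => ⟨hpick _ hx, ?_⟩⟩
  · show a i < a i + M (pick (a i)) + 1
    omega
  · show x < a i + M (pick (a i)) + 1
    have := hM (pick (a i)) hx
    omega

lemma exists_frequently_le_of_not_bounded {ℬ : Set (ℕ → ℕ)}
    (hunb : ¬ ∃ h : ℕ → ℕ, ∀ f ∈ ℬ, ∀ᶠ n in atTop, f n < h n) (h : ℕ → ℕ) :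
    ∃ f ∈ ℬ, ∃ᶠ n in atTop, h n ≤ f n := by
  by_contra! hcon
  exact hunb ⟨h, fun f hf => by simpa using hcon f hf⟩

lemma card_le_of_forall_not_disjoint_range {a g : ℕ → ℕ} (ha : Monotone a) (hg : Monotone g)
    {m n : ℕ} (hmn : a n ≤ g m) {s : Finset ℕ}
    (hs : ∀ i ∈ s, i < n ∧ ¬Disjoint (range g) (Ico (a i) (a (i + 1)))) : s.card ≤ m := by
  refine (s.card_le_card_of_forall_subsingleton (t := Finset.range m)
    (fun i k => g k ∈ Ico (a i) (a (i + 1))) (fun i hi => ?_)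
    (fun k _ i hi j hj => ha.pairwise_disjoint_on_Ico_succ.eq
      (not_disjoint_iff.2 ⟨g k, hi.2, hj.2⟩))).trans_eq (Finset.card_range m)
  obtain ⟨hin, hhit⟩ := hs i hi
  obtain ⟨_, ⟨k, rfl⟩, hk⟩ := not_disjoint_iff.1 hhit
  refine ⟨k, Finset.mem_range.2 ?_, hk⟩
  by_contra! hmk
  exact (hk.2.trans_le (ha hin)).not_ge (hmn.trans (hg hmk))

lemma infinite_setOf_disjoint_range_Ico {a g : ℕ → ℕ} (ha : Monotone a) (hg : Monotone g)
    (hag : ∃ᶠ m in atTop, a (2 * m) ≤ g m) :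
    {i | Disjoint (range g) (Ico (a i) (a (i + 1)))}.Infinite := by
  refine Set.infinite_of_forall_exists_gt fun N => ?_
  obtain ⟨m, hNm, hm⟩ := frequently_atTop.1 hag (N + 2)
  by_contra! hmissed
  have hcard := card_le_of_forall_not_disjoint_range ha hg hm (s := Finset.Ioo N (2 * m))
    fun i hi => ⟨(Finset.mem_Ioo.1 hi).2,
      fun hdisj => (hmissed i hdisj).not_gt (Finset.mem_Ioo.1 hi).1⟩
  rw [Nat.card_Ioo] at hcard
  omega

/-- If `ℬ ⊆ ω^ω` is unbounded (w.r.t. eventual domination) and consists of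
strictly increasing functions, and `(C n)` is a sequence of pairwise disjoint finite nonempty
subsets of `ω`, then some `g ∈ ℬ` and some infinite `E ⊆ ω` satisfy
`range g ∩ ⋃_{n ∈ E} C n = ∅`. -/
theorem stmt5 (ℬ : Set (ℕ → ℕ))
    (hunb : ¬ ∃ h : ℕ → ℕ, ∀ f ∈ ℬ, ∀ᶠ n in atTop, f n < h n)
    (hmono : ∀ f ∈ ℬ, StrictMono f)
    (C : ℕ → Set ℕ) (hfin : ∀ n, (C n).Finite) (hne : ∀ n, (C n).Nonempty)
    (hdisj : ∀ m n, m ≠ n → Disjoint (C m) (C n)) :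
    ∃ g ∈ ℬ, ∃ E : Set ℕ, E.Infinite ∧ Disjoint (Set.range g) (⋃ n ∈ E, C n) := by
  obtain ⟨a, ha, idx, hsub⟩ := exists_strictMono_subset_Ico hfin fun m n => hdisj m n
  obtain ⟨g, hgℬ, hg⟩ := exists_frequently_le_of_not_bounded hunb fun m => a (2 * m)
  have hmissed := infinite_setOf_disjoint_range_Ico ha.monotone (hmono g hgℬ).monotone hg
  refine ⟨g, hgℬ, idx '' {i | Disjoint (range g) (Ico (a i) (a (i + 1)))},
    hmissed.image fun i _ j _ hij => ?_, ?_⟩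
  · obtain ⟨x, hx⟩ := hne (idx i)
    exact ha.monotone.pairwise_disjoint_on_Ico_succ.eq
      (not_disjoint_iff.2 ⟨x, hsub i hx, hsub j (hij ▸ hx)⟩)
  · rw [biUnion_image, disjoint_iUnion₂_right]
    exact fun i hi => hi.mono_right (hsub i)
end

section
/- Suppose $\omega \subseteq X \subseteq \beta\omega$, $p$ is a free ultrafilter on $\omega$, $(C_n)_{n\in\omega}$ is a sequence of pairwise disjoint finite nonempty subsets of $\omega$, $\mathcal{G} = \{g \in \omega^\omega : \forall n,\ g(n) \in C_n\}$, and $Z_p = \{p\text{-}\lim g : g \in \mathcal{G}\} \subseteq \beta\omega$. If $Z_p \subseteq X$, then the closure $\mathrm{cl}_X(Z_p)$ is the $p$-limit of the sequence $(C_n)$ in the Vietoris hyperspace $\mathrm{CL}(X)$, i.e., for every Vietoris-open neighborhood $U$ of $\mathrm{cl}_X(Z_p)$ in $\mathrm{CL}(X)$, the set $\{n : C_n \in U\}$ belongs to $p$. -/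
open Filter Topology

/-- The Vietoris hyperspace `CL(X)` of nonempty closed subsets of `X`. -/
def CL (X : Type*) [TopologicalSpace X] : Type _ := {F : Set X // F.Nonempty ∧ IsClosed F}

/-- The Vietoris topology. -/
instance CL.instTopologicalSpace (X : Type*) [TopologicalSpace X] : TopologicalSpace (CL X) :=
  TopologicalSpace.generateFrom
    {S | ∃ A : Set X, IsOpen A ∧
      (S = {F : CL X | F.1 ⊆ A} ∨ S = {F : CL X | (F.1 ∩ A).Nonempty})}

/-- Suppose `ω ⊆ X ⊆ βω`, `p` is a free ultrafilter, `(C n)` is a sequence of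
pairwise disjoint finite nonempty subsets of `ω`, and `Z_p = {p-lim g : g a selector of C}`.
If `Z_p ⊆ X`, then `cl_X(Z_p)` is the `p`-limit of `(C n)` in the Vietoris hyperspace of `X`:
every Vietoris-open set containing `cl_X(Z_p)` contains `C n` for a `p`-large set of `n`. -/
theorem stmt11 (X : Set (Ultrafilter ℕ)) (hX : ∀ n : ℕ, (pure n : Ultrafilter ℕ) ∈ X)
    (p : Ultrafilter ℕ) (hp : ∀ a, p ≠ pure a)
    (C : ℕ → Set ℕ) (hfin : ∀ n, (C n).Finite) (hne : ∀ n, (C n).Nonempty)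
    (hdisj : ∀ m n, m ≠ n → Disjoint (C m) (C n))
    (Zp : Set (Ultrafilter ℕ))
    (hZp : Zp = {x | ∃ g : ℕ → ℕ, (∀ n, g n ∈ C n) ∧
      Tendsto (fun n => (pure (g n) : Ultrafilter ℕ)) ↑p (𝓝 x)})
    (hsub : Zp ⊆ X)
    (F : CL ↥X) (hF : F.1 = closure {x : ↥X | ↑x ∈ Zp})
    (K : ℕ → CL ↥X)
    (hK : ∀ n, (K n).1 = {x : ↥X | ∃ k ∈ C n, (x : Ultrafilter ℕ) = pure k}) :
    ∀ U : Set (CL ↥X), IsOpen U → F ∈ U → {n | K n ∈ U} ∈ p := by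
  intro U hU hFU
  set gens : Set (Set (CL ↥X)) :=
    {S | ∃ A : Set ↥X, IsOpen A ∧
      (S = {F : CL ↥X | F.1 ⊆ A} ∨ S = {F : CL ↥X | (F.1 ∩ A).Nonempty})} with hgens
  -- key: subbasic neighborhoods
  have key : ∀ S ∈ gens, F ∈ S → {n | K n ∈ S} ∈ p := by
    rintro S ⟨A, hA, hAS⟩ hFS
    obtain ⟨B, hB, hAB⟩ := isOpen_induced_iff.mp hA
    rcases hAS with rfl | rfl
    · -- S = {G | G.1 ⊆ A}
      by_contra hnot
      rw [← Ultrafilter.compl_mem_iff_notMem] at hnot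
      have hch : ∀ n, ∃ k ∈ C n, ¬ (K n).1 ⊆ A →
          ∀ x : ↥X, (x : Ultrafilter ℕ) = pure k → x ∉ A := by
        intro n
        by_cases h : (K n).1 ⊆ A
        · obtain ⟨k, hk⟩ := hne n
          exact ⟨k, hk, fun hc => absurd h hc⟩
        · obtain ⟨x, hx, hxA⟩ := Set.not_subset.mp h
          rw [hK n] at hx
          obtain ⟨k, hk, hxk⟩ := hx
          refine ⟨k, hk, fun _ y hy => ?_⟩
          have hyx : y = x := Subtype.ext (hy.trans hxk.symm)
          rwa [hyx]
      choose g hg hgbad using hch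
      set x : Ultrafilter ℕ := p.map g with hx
      have htend : Tendsto (fun n => (pure (g n) : Ultrafilter ℕ)) ↑p (𝓝 x) := by
        have h1 : Tendsto g ↑p ↑x := by
          rw [hx, Ultrafilter.coe_map]
          exact le_rfl
        exact (Ultrafilter.tendsto_pure_self x).comp h1
      have hxZ : x ∈ Zp := by rw [hZp]; exact ⟨g, hg, htend⟩
      have hxF : (⟨x, hsub hxZ⟩ : ↥X) ∈ F.1 := by
        rw [hF]; exact subset_closure hxZ
      have hxA : (⟨x, hsub hxZ⟩ : ↥X) ∈ A := hFS hxF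
      have hxB : x ∈ B := by rw [← hAB] at hxA; exact hxA
      have hmem : {n | (pure (g n) : Ultrafilter ℕ) ∈ B} ∈ p :=
        htend (hB.mem_nhds hxB)
      obtain ⟨n, hn1, hn2⟩ := Ultrafilter.nonempty_of_mem (inter_mem hnot hmem)
      exact hgbad n hn1 ⟨pure (g n), hX (g n)⟩ rfl (by rw [← hAB]; exact hn2)
    · -- S = {G | (G.1 ∩ A).Nonempty}
      obtain ⟨y, hyF, hyA⟩ := hFS
      rw [hF] at hyF
      obtain ⟨z, hzA, hzZ⟩ := mem_closure_iff.mp hyF A hA hyA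
      obtain ⟨g, hg, htend⟩ := hZp ▸ hzZ
      have hzB : (z : Ultrafilter ℕ) ∈ B := by rw [← hAB] at hzA; exact hzA
      have hmem : {n | (pure (g n) : Ultrafilter ℕ) ∈ B} ∈ p :=
        htend (hB.mem_nhds hzB)
      refine Filter.mem_of_superset hmem (fun n hn => ?_)
      refine ⟨⟨pure (g n), hX (g n)⟩, ?_, by rw [← hAB]; exact hn⟩
      rw [hK n]; exact ⟨g n, hg n, rfl⟩
  -- induction over the generated topology
  have hU' : TopologicalSpace.GenerateOpen gens U := hU
  clear hU
  revert hFU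
  induction hU' with
  | basic S hS => exact fun hFS => key S hS hFS
  | univ => exact fun _ => Filter.univ_mem
  | inter s t hs ht ihs iht =>
      exact fun hFst => inter_mem (ihs hFst.1) (iht hFst.2)
  | sUnion S hS ih =>
      rintro ⟨t, htS, hFt⟩
      exact Filter.mem_of_superset (ih t htS hFt) (fun n hn => ⟨t, htS, hn⟩)
end

section
/- Suppose $\omega \subseteq X \subseteq \beta\omega$, $p$ is a free ultrafilter on $\omega$, $(C_n)_{n\in\omega}$ is a sequence of pairwise disjoint finite nonempty subsets of $\omega$, $\mathcal{G} = \{g \in \omega^\omega : \forall n,\ g(n) \in C_n\}$, and $Z_p = \{p\text{-}\lim g : g \in \mathcal{G}\}$. If the sequence $(C_n)$ has a $p$-limit $F$ in the Vietoris hyperspace $\mathrm{CL}(X)$, then $Z_p \subseteq F$; in particular $Z_p \subseteq X$. -/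
open Filter Topology

/-!
Write `x = p-lim (g n)` with `g n ∈ C n`, so that `x = map g p`. The Vietoris limit `F` must
meet the clopen set `{u | range g ∈ u}`, since otherwise `C n` would eventually miss `range g`;
let `y` be a point of `F` in it. For `T ∈ y`, the open set `{u | T ∩ range g ∈ u}` meets `F`,
so `C n` meets `T ∩ range g` for `p`-many `n`, and by disjointness of the `C n` the only point of
`C n` in `range g` is `g n`. Hence `g ⁻¹' T ∈ p` for every `T ∈ y`, i.e. `y = map g p = x`.
-/

open Function

namespace CL

variable {X ι : Type*} [TopologicalSpace X] {l : Filter ι} {K : ι → CL X} {F : CL X}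
  {A : Set X}

theorem isOpen_setOf_subset (hA : IsOpen A) : IsOpen {F : CL X | F.1 ⊆ A} :=
  TopologicalSpace.isOpen_generateFrom_of_mem ⟨A, hA, Or.inl rfl⟩

theorem isOpen_setOf_inter_nonempty (hA : IsOpen A) : IsOpen {F : CL X | (F.1 ∩ A).Nonempty} :=
  TopologicalSpace.isOpen_generateFrom_of_mem ⟨A, hA, Or.inr rfl⟩

theorem eventually_subset_of_tendsto (hK : Tendsto K l (𝓝 F)) (hA : IsOpen A) (hFA : F.1 ⊆ A) :
    ∀ᶠ n in l, (K n).1 ⊆ A :=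
  hK ((isOpen_setOf_subset hA).mem_nhds hFA)

theorem eventually_inter_nonempty_of_tendsto (hK : Tendsto K l (𝓝 F)) (hA : IsOpen A)
    (hFA : (F.1 ∩ A).Nonempty) : ∀ᶠ n in l, ((K n).1 ∩ A).Nonempty :=
  hK ((isOpen_setOf_inter_nonempty hA).mem_nhds hFA)

end CL

namespace Ultrafilter

variable {α ι : Type*}

theorem eq_map_of_tendsto_pure {g : ι → α} {p : Ultrafilter ι} {x : Ultrafilter α}
    (h : Tendsto (fun n => (pure (g n) : Ultrafilter α)) p (𝓝 x)) : x = p.map g :=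
  (eq_of_le fun S hS => h ((ultrafilter_isOpen_basic S).mem_nhds hS)).symm

section VietorisLimit

variable {X : Set (Ultrafilter α)} {p : Ultrafilter ι} {C : ι → Set α} {K : ι → CL X}
  {F : CL X}

theorem eventually_inter_nonempty_of_mem
    (hK : ∀ n, (K n).1 = {x : X | ∃ k ∈ C n, (x : Ultrafilter α) = pure k})
    (hKF : Tendsto K p (𝓝 F)) {y : X} (hyF : y ∈ F.1) {S : Set α}
    (hS : S ∈ (y : Ultrafilter α)) :
    ∀ᶠ n in p, (C n ∩ S).Nonempty := by
  have hA : IsOpen {z : X | S ∈ (z : Ultrafilter α)} :=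
    (ultrafilter_isOpen_basic S).preimage continuous_subtype_val
  filter_upwards [CL.eventually_inter_nonempty_of_tendsto hKF hA ⟨y, hyF, hS⟩]
    with n ⟨z, hzK, hzS⟩
  rw [hK] at hzK
  obtain ⟨k, hkC, hzk⟩ := hzK
  change S ∈ (z : Ultrafilter α) at hzS
  rw [hzk, mem_pure] at hzS
  exact ⟨k, hkC, hzS⟩

theorem exists_mem_range_mem (hX : ∀ a, (pure a : Ultrafilter α) ∈ X)
    (hK : ∀ n, (K n).1 = {x : X | ∃ k ∈ C n, (x : Ultrafilter α) = pure k})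
    (hKF : Tendsto K p (𝓝 F)) {g : ι → α} (hg : ∀ n, g n ∈ C n) :
    ∃ y ∈ F.1, Set.range g ∈ (y : Ultrafilter α) := by
  by_contra! hF
  have hA : IsOpen {z : X | Set.range g ∈ (z : Ultrafilter α)}ᶜ :=
    ((ultrafilter_isClosed_basic _).preimage continuous_subtype_val).isOpen_compl
  obtain ⟨n, hn⟩ := (CL.eventually_subset_of_tendsto hKF hA hF).exists
  have hgn : (⟨pure (g n), hX (g n)⟩ : X) ∈ (K n).1 := by
    rw [hK]
    exact ⟨g n, hg n, rfl⟩
  exact hn hgn (mem_pure.mpr (Set.mem_range_self n))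

theorem exists_mem_val_eq_map (hX : ∀ a, (pure a : Ultrafilter α) ∈ X)
    (hdisj : Pairwise (Disjoint on C))
    (hK : ∀ n, (K n).1 = {x : X | ∃ k ∈ C n, (x : Ultrafilter α) = pure k})
    (hKF : Tendsto K p (𝓝 F)) {g : ι → α} (hg : ∀ n, g n ∈ C n) :
    ∃ y ∈ F.1, (y : Ultrafilter α) = p.map g := by
  obtain ⟨y, hyF, hyg⟩ := exists_mem_range_mem hX hK hKF hg
  refine ⟨y, hyF, (eq_of_le fun T hT => mem_map.mpr ?_).symm⟩
  have hmeet := eventually_inter_nonempty_of_mem hK hKF hyF (inter_mem hT hyg)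
  filter_upwards [hmeet] with n ⟨k, hkC, hkT, m, hmk⟩
  subst hmk
  obtain rfl : m = n := by_contra fun hmn => (hdisj hmn).ne_of_mem (hg m) hkC rfl
  exact hkT

end VietorisLimit

end Ultrafilter

theorem stmt12_general (X : Set (Ultrafilter ℕ)) (hX : ∀ n : ℕ, (pure n : Ultrafilter ℕ) ∈ X)
    (p : Ultrafilter ℕ)
    (C : ℕ → Set ℕ)
    (hdisj : ∀ m n, m ≠ n → Disjoint (C m) (C n))
    (Zp : Set (Ultrafilter ℕ))
    (hZp : Zp = {x | ∃ g : ℕ → ℕ, (∀ n, g n ∈ C n) ∧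
      Tendsto (fun n => (pure (g n) : Ultrafilter ℕ)) ↑p (𝓝 x)})
    (F : CL ↥X)
    (K : ℕ → CL ↥X)
    (hK : ∀ n, (K n).1 = {x : ↥X | ∃ k ∈ C n, (x : Ultrafilter ℕ) = pure k})
    (hlim : ∀ U : Set (CL ↥X), IsOpen U → F ∈ U → {n | K n ∈ U} ∈ p) :
    Zp ⊆ Subtype.val '' F.1 ∧ Zp ⊆ X := by
  have hKF : Tendsto K p (𝓝 F) := tendsto_nhds.mpr hlim
  have hZF : Zp ⊆ Subtype.val '' F.1 := by
    subst hZp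
    rintro x ⟨g, hg, hx⟩
    obtain ⟨y, hyF, hy⟩ := Ultrafilter.exists_mem_val_eq_map hX hdisj hK hKF hg
    exact ⟨y, hyF, hy.trans (Ultrafilter.eq_map_of_tendsto_pure hx).symm⟩
  exact ⟨hZF, hZF.trans (Subtype.coe_image_subset X F.1)⟩

/-- With the setup of Statement 11, if `(C n)` has a `p`-limit `F` in the
Vietoris hyperspace `CL(X)`, then `Z_p ⊆ F`; in particular `Z_p ⊆ X`. -/
theorem stmt12 (X : Set (Ultrafilter ℕ)) (hX : ∀ n : ℕ, (pure n : Ultrafilter ℕ) ∈ X)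
    (p : Ultrafilter ℕ) (hp : ∀ a, p ≠ pure a)
    (C : ℕ → Set ℕ) (hfin : ∀ n, (C n).Finite) (hne : ∀ n, (C n).Nonempty)
    (hdisj : ∀ m n, m ≠ n → Disjoint (C m) (C n))
    (Zp : Set (Ultrafilter ℕ))
    (hZp : Zp = {x | ∃ g : ℕ → ℕ, (∀ n, g n ∈ C n) ∧
      Tendsto (fun n => (pure (g n) : Ultrafilter ℕ)) ↑p (𝓝 x)})
    (F : CL ↥X)
    (K : ℕ → CL ↥X)
    (hK : ∀ n, (K n).1 = {x : ↥X | ∃ k ∈ C n, (x : Ultrafilter ℕ) = pure k})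
    (hlim : ∀ U : Set (CL ↥X), IsOpen U → F ∈ U → {n | K n ∈ U} ∈ p) :
    Zp ⊆ Subtype.val '' F.1 ∧ Zp ⊆ X :=
  stmt12_general X hX p C hdisj Zp hZp F K hK hlim
end

section
/- Let $f_0, f_1 : \omega \to \omega$ and let $q_0, q_1$ be free ultrafilters on $\omega$ such that for $i \in \{0,1\}$, $f_i$ is injective on some set in $q_i$ (equivalently, $f_i$ is not $q_i$-equivalent to a constant). If $q_0$ and $q_1$ are selective and incomparable (no bijection of $\omega$ maps $q_0$ to $q_1$), then $q_0\text{-}\lim f_0 \neq q_1\text{-}\lim f_1$ in $\beta\omega$. Consequently, setting $S(q) = \{q\text{-}\lim h : h \in \omega^\omega\} \cap \omega^*$, incomparable selective ultrafilters $q_0, q_1$ satisfy $S(q_0) \cap S(q_1) = \emptyset$. -/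
/-- `q` is a selective ultrafilter: for every partition of `ω` into sets not in `q` there is
a member of `q` meeting each piece in at most one point. -/
def Selective (q : Ultrafilter ℕ) : Prop :=
  ∀ I : ℕ → Set ℕ, (∀ m n, m ≠ n → Disjoint (I m) (I n)) → (⋃ n, I n) = Set.univ →
    (∀ n, I n ∉ q) → ∃ A ∈ q, ∀ n, (A ∩ I n).Subsingleton

/-- `q₀` and `q₁` are incomparable: no bijection of `ω` maps `q₀` to `q₁`. -/
def Incomparable (q₀ q₁ : Ultrafilter ℕ) : Prop :=
  ∀ f : ℕ → ℕ, Function.Bijective f → Ultrafilter.map f q₀ ≠ q₁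

open Set Function

private lemma mem_infinite {q : Ultrafilter ℕ} (hfree : ∀ a, q ≠ pure a)
    {A : Set ℕ} (hA : A ∈ q) : A.Infinite := by
  by_contra hninf
  rw [Set.not_infinite] at hninf
  have hfin := hninf
  obtain ⟨a, -, ha⟩ := Ultrafilter.eq_pure_of_finite_mem hfin hA
  exact hfree a ha

private lemma split {S : Set ℕ} (hS : S.Infinite) :
    ∃ B ⊆ S, B.Infinite ∧ (S \ B).Infinite := by
  haveI : Infinite S := hS.to_subtype
  obtain ⟨e⟩ : Nonempty (ℕ ≃ S) := nonempty_equiv_of_countable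
  set g : ℕ → ℕ := fun n => (e n : ℕ) with hg
  have hginj : Function.Injective g := fun a b hab => e.injective (Subtype.ext hab)
  have hev : {n : ℕ | Even n}.Infinite :=
    Set.infinite_of_injective_forall_mem (f := fun k : ℕ => 2 * k)
      (fun a b h => by dsimp at h; omega) (fun k => ⟨k, by ring⟩)
  have hodd : {n : ℕ | ¬ Even n}.Infinite :=
    Set.infinite_of_injective_forall_mem (f := fun k : ℕ => 2 * k + 1)
      (fun a b h => by dsimp at h; omega) (fun k => by simp [Nat.even_add_one, Nat.even_mul])
  refine ⟨g '' {n | Even n}, ?_, hev.image (hginj.injOn), ?_⟩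
  · rintro x ⟨n, -, rfl⟩; exact (e n).2
  · refine (hodd.image (hginj.injOn)).mono ?_
    rintro x ⟨n, hn, rfl⟩
    refine ⟨(e n).2, ?_⟩
    rintro ⟨m, hm, hmn⟩
    exact hn (hginj hmn ▸ hm)

private lemma extend_bij (q : Ultrafilter ℕ) (f : ℕ → ℕ) {C : Set ℕ}
    (hC : C ∈ q) (hinj : Set.InjOn f C) (hCc : (Cᶜ : Set ℕ).Infinite)
    (hfCc : ((f '' C)ᶜ : Set ℕ).Infinite) :
    ∃ e : ℕ ≃ ℕ, Ultrafilter.map (⇑e) q = Ultrafilter.map f q := by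
  classical
  haveI : Infinite (Cᶜ : Set ℕ) := hCc.to_subtype
  haveI : Infinite ((f '' C)ᶜ : Set ℕ) := hfCc.to_subtype
  obtain ⟨e₂⟩ : Nonempty ((Cᶜ : Set ℕ) ≃ ((f '' C)ᶜ : Set ℕ)) := nonempty_equiv_of_countable
  let e₁ : C ≃ (f '' C) := Equiv.Set.imageOfInjOn f C hinj
  let E : ℕ ≃ ℕ :=
    (Equiv.Set.sumCompl C).symm.trans ((e₁.sumCongr e₂).trans (Equiv.Set.sumCompl (f '' C)))
  have heq : ∀ x ∈ C, E x = f x := by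
    intro x hx
    simp only [E, Equiv.trans_apply, Equiv.Set.sumCompl_symm_apply_of_mem hx,
      Equiv.sumCongr_apply, Sum.map_inl, Equiv.Set.sumCompl_apply_inl]
    rfl
  refine ⟨E, ?_⟩
  apply Ultrafilter.coe_injective
  rw [Ultrafilter.coe_map, Ultrafilter.coe_map]
  exact Filter.map_congr (Filter.eventuallyEq_of_mem hC heq)

private lemma exists_equiv (q : Ultrafilter ℕ) (hfree : ∀ a, q ≠ pure a) (f : ℕ → ℕ)
    {A : Set ℕ} (hA : A ∈ q) (hinj : Set.InjOn f A) :
    ∃ e : ℕ ≃ ℕ, Ultrafilter.map (⇑e) q = Ultrafilter.map f q := by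
  obtain ⟨B, hBA, hB, hAB⟩ := split (mem_infinite hfree hA)
  have key : ∀ C D : Set ℕ, C ∪ D = A → Disjoint C D → C ∈ q → D.Infinite →
      ∃ e : ℕ ≃ ℕ, Ultrafilter.map (⇑e) q = Ultrafilter.map f q := by
    intro C D hCD hdisj hCq hD
    have hCA : C ⊆ A := hCD ▸ Set.subset_union_left
    have hDA : D ⊆ A := hCD ▸ Set.subset_union_right
    refine extend_bij q f hCq (hinj.mono hCA) (hD.mono ?_) ?_
    · intro x hx
      exact fun hxC => (hdisj.ne_of_mem hxC hx rfl).elim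
    · refine (hD.image (hinj.mono hDA)).mono ?_
      rintro y ⟨x, hx, rfl⟩ ⟨x', hx', hxx⟩
      exact hdisj.ne_of_mem hx' hx (hinj (hCA hx') (hDA hx) hxx)
  rcases q.mem_or_compl_mem B with hBq | hBq
  · exact key B (A \ B) (by rw [Set.union_diff_cancel hBA]) Set.disjoint_sdiff_right hBq hAB
  · refine key (A \ B) B (by rw [Set.diff_union_of_subset hBA]) Set.disjoint_sdiff_left ?_ hB
    exact Filter.inter_mem hA hBq

private lemma const_or_inj {q : Ultrafilter ℕ} (hs : Selective q) (h : ℕ → ℕ) :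
    (∃ c, Ultrafilter.map h q = pure c) ∨ (∃ A ∈ q, Set.InjOn h A) := by
  by_cases hc : ∃ c, h ⁻¹' {c} ∈ q
  · obtain ⟨c, hc⟩ := hc
    left
    have : ({c} : Set ℕ) ∈ Ultrafilter.map h q := Ultrafilter.mem_map.2 hc
    obtain ⟨x, hx, hxx⟩ := Ultrafilter.eq_pure_of_finite_mem (Set.finite_singleton c) this
    exact ⟨x, hxx⟩
  · push_neg at hc
    right
    obtain ⟨A, hAq, hA⟩ := hs (fun n => h ⁻¹' {n})
      (fun m n hmn => Set.disjoint_left.2 fun x hx hx' => hmn ((Set.eq_of_mem_singleton hx).symm.trans (Set.eq_of_mem_singleton hx')))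
      (Set.eq_univ_of_forall fun x => Set.mem_iUnion.2 ⟨h x, rfl⟩)
      hc
    exact ⟨A, hAq, fun x hx y hy hxy =>
      (hA (h y)) ⟨hx, by simp [hxy]⟩ ⟨hy, rfl⟩⟩

/-- If `q₀, q₁` are incomparable free selective ultrafilters and `f₀, f₁` are
injective on sets of `q₀`, `q₁` respectively (i.e. not `qᵢ`-equivalent to constants),
then `q₀-lim f₀ ≠ q₁-lim f₁` in `βω` (where `q-lim f = Ultrafilter.map f q`).
Consequently `S(q₀) ∩ S(q₁) = ∅` where `S(q) = {q-lim h : h ∈ ω^ω} ∩ ω^*`. -/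
theorem stmt16 (q₀ q₁ : Ultrafilter ℕ)
    (h0 : ∀ a, q₀ ≠ pure a) (h1 : ∀ a, q₁ ≠ pure a)
    (hs0 : Selective q₀) (hs1 : Selective q₁) (hinc : Incomparable q₀ q₁) :
    (∀ f₀ f₁ : ℕ → ℕ, (∃ A ∈ q₀, Set.InjOn f₀ A) → (∃ A ∈ q₁, Set.InjOn f₁ A) →
      Ultrafilter.map f₀ q₀ ≠ Ultrafilter.map f₁ q₁) ∧
    {x : Ultrafilter ℕ | (∃ h : ℕ → ℕ, x = Ultrafilter.map h q₀) ∧ ∀ a, x ≠ pure a} ∩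
      {x : Ultrafilter ℕ | (∃ h : ℕ → ℕ, x = Ultrafilter.map h q₁) ∧ ∀ a, x ≠ pure a} = ∅ := by

  have part1 : ∀ f₀ f₁ : ℕ → ℕ, (∃ A ∈ q₀, Set.InjOn f₀ A) → (∃ A ∈ q₁, Set.InjOn f₁ A) →
      Ultrafilter.map f₀ q₀ ≠ Ultrafilter.map f₁ q₁ := by
    rintro f₀ f₁ ⟨A₀, hA₀, hi₀⟩ ⟨A₁, hA₁, hi₁⟩ heq
    obtain ⟨e₀, he₀⟩ := exists_equiv q₀ h0 f₀ hA₀ hi₀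
    obtain ⟨e₁, he₁⟩ := exists_equiv q₁ h1 f₁ hA₁ hi₁
    refine hinc (⇑e₁.symm ∘ ⇑e₀) ((e₀.trans e₁.symm).bijective) ?_
    have : Ultrafilter.map (⇑e₁.symm) (Ultrafilter.map (⇑e₀) q₀) =
        Ultrafilter.map (⇑e₁.symm) (Ultrafilter.map (⇑e₁) q₁) := by
      rw [he₀, he₁, heq]
    rw [Ultrafilter.map_map, Ultrafilter.map_map] at this
    rw [this]
    have : (⇑e₁.symm ∘ ⇑e₁) = id := by funext x; simp
    rw [this, Ultrafilter.map_id]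
  refine ⟨part1, ?_⟩
  rw [Set.eq_empty_iff_forall_notMem]
  rintro x ⟨⟨⟨g₀, hg₀⟩, hxfree⟩, ⟨g₁, hg₁⟩, -⟩
  rcases const_or_inj hs0 g₀ with ⟨c, hc⟩ | hi₀
  · exact hxfree c (hg₀ ▸ hc)
  rcases const_or_inj hs1 g₁ with ⟨c, hc⟩ | hi₁
  · exact hxfree c (hg₁ ▸ hc)
  exact part1 g₀ g₁ hi₀ hi₁ (hg₀ ▸ hg₁ ▸ rfl)
end

section
/- For every open dense family $\mathcal{U} \subseteq [\omega]^\omega$ (in the $\subseteq^*$ sense) and every sequence $(A_n)$ of finite subsets of $\omega$, the family $\mathcal{U}' = \{I \in [\omega]^\omega : \exists m \in \omega \text{ such that } (A_n)_n \text{ admits a nice dissection over } I \setminus m\}$ is open dense in $[\omega]^\omega$: every infinite set contains an infinite member of $\mathcal{U}'$, and $\mathcal{U}'$ is closed under infinite almost-subsets. -/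
/-- A family `𝒜 ⊆ [ω]^ω` is open dense in `([ω]^ω, ⊆*)`. -/
def OpenDense (𝒜 : Set (Set ℕ)) : Prop :=
  (∀ A ∈ 𝒜, A.Infinite) ∧
  (∀ B : Set ℕ, B.Infinite → ∃ A ∈ 𝒜, A ⊆ B) ∧
  (∀ A ∈ 𝒜, ∀ A' : Set ℕ, A'.Infinite → (A' \ A).Finite → A' ∈ 𝒜)

/-- `(A n)` admits a nice dissection over `X`: `A n = U n ∪ D n` disjointly for `n ∈ X`,
with `(U n)` increasing along `X` and `(D n)` pairwise disjoint along `X`. -/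
def NiceDissection (A : ℕ → Set ℕ) (X : Set ℕ) : Prop :=
  ∃ U D : ℕ → Set ℕ,
    (∀ n ∈ X, A n = U n ∪ D n ∧ Disjoint (U n) (D n)) ∧
    (∀ m ∈ X, ∀ n ∈ X, m ≤ n → U m ⊆ U n) ∧
    (∀ m ∈ X, ∀ n ∈ X, m ≠ n → Disjoint (D m) (D n))

/-!
Pass to a subsequence along which the sets `A n` converge pointwise to some `L ⊆ ω`
(compactness of the Cantor space), and thin it out so that each later `A n` agrees with `L`
on the finitely many points of every earlier one. Then `U n = A n ∩ L`, `D n = A n \ L` is a nice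
dissection. Membership in the family is insensitive to finite changes because a finite
difference is absorbed by raising `m`.
-/

open Filter

lemma NiceDissection.subset {A : ℕ → Set ℕ} {X Y : Set ℕ}
    (h : NiceDissection A X) (hYX : Y ⊆ X) : NiceDissection A Y := by
  obtain ⟨U, D, hsplit, hU, hD⟩ := h
  exact ⟨U, D, fun n hn => hsplit n (hYX hn),
    fun m hm n hn => hU m (hYX hm) n (hYX hn),
    fun m hm n hn => hD m (hYX hm) n (hYX hn)⟩

lemma niceDissection_of_inter_eq {A : ℕ → Set ℕ} {X : Set ℕ} (L : Set ℕ)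
    (h : ∀ i ∈ X, ∀ j ∈ X, i < j → A j ∩ A i = L ∩ A i) : NiceDissection A X := by
  have hD : ∀ i ∈ X, ∀ j ∈ X, i < j → Disjoint (A i \ L) (A j \ L) := by
    refine fun i hi j hj hij => Set.disjoint_left.2 fun x hxi hxj => hxi.2 ?_
    have : x ∈ L ∩ A i := h i hi j hj hij ▸ ⟨hxj.1, hxi.1⟩
    exact this.1
  refine ⟨fun n => A n ∩ L, fun n => A n \ L, fun n _ => ?_, fun i hi j hj hij => ?_,
    fun i hi j hj hij => ?_⟩
  · exact ⟨(Set.inter_union_sdiff _ _).symm, Set.disjoint_sdiff_inter.symm⟩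
  · rcases hij.eq_or_lt with rfl | hlt
    · rfl
    · intro x hx
      have : x ∈ A j ∩ A i := (h i hi j hj hlt).symm ▸ ⟨hx.2, hx.1⟩
      exact ⟨this.1, hx.2⟩
  · rcases hij.lt_or_gt with hlt | hlt
    · exact hD i hi j hj hlt
    · exact (hD j hj i hi hlt).symm

lemma exists_subseq_pointwise_limit {α : Type*} [Countable α] (S : ℕ → Set α) :
    ∃ L : Set α, ∃ φ : ℕ → ℕ, StrictMono φ ∧ ∀ x, ∀ᶠ k in atTop, (x ∈ S (φ k) ↔ x ∈ L) := by
  classical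
  obtain ⟨f, φ, hφ, hlim⟩ :=
    CompactSpace.tendsto_subseq (X := α → Bool) fun k x => decide (x ∈ S k)
  refine ⟨{x | f x}, φ, hφ, fun x => ?_⟩
  have := tendsto_pi_nhds.1 hlim x
  rw [nhds_discrete, tendsto_pure] at this
  filter_upwards [this] with k hk
  simpa using congrArg (· = true) hk

lemma exists_strictMono_forall_lt_rel {r : ℕ → ℕ → Prop} (hr : ∀ m, ∀ᶠ n in atTop, r m n) :
    ∃ φ : ℕ → ℕ, StrictMono φ ∧ ∀ ⦃m n⦄, m < n → r (φ m) (φ n) :=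
  let ⟨φ, hφ, hrφ, _⟩ := (hasAntitoneBasis_atTop (α := ℕ)).subbasis_with_rel hr
  ⟨φ, hφ, hrφ⟩

lemma exists_infinite_subset_niceDissection {A : ℕ → Set ℕ} (hfin : ∀ n, (A n).Finite)
    {B : Set ℕ} (hB : B.Infinite) : ∃ I ⊆ B, I.Infinite ∧ NiceDissection A I := by
  set s := Nat.nth (· ∈ B)
  obtain ⟨L, φ, hφ, hL⟩ := exists_subseq_pointwise_limit fun k => A (s k)
  have hagree : ∀ i, ∀ᶠ k in atTop, A (s (φ k)) ∩ A (s (φ i)) = L ∩ A (s (φ i)) := by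
    intro i
    filter_upwards [(hfin _).eventually_all.2 fun x _ => hL x] with k hk
    ext x
    exact ⟨fun hx => ⟨(hk x hx.2).1 hx.1, hx.2⟩, fun hx => ⟨(hk x hx.2).2 hx.1, hx.2⟩⟩
  obtain ⟨ψ, hψ, hrel⟩ := exists_strictMono_forall_lt_rel hagree
  have hmono : StrictMono (s ∘ φ ∘ ψ) := (Nat.nth_strictMono hB).comp (hφ.comp hψ)
  refine ⟨Set.range (s ∘ φ ∘ ψ), ?_, Set.infinite_range_of_injective hmono.injective,
    niceDissection_of_inter_eq L ?_⟩
  · rintro _ ⟨k, rfl⟩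
    exact Nat.nth_mem_of_infinite hB _
  · rintro _ ⟨i, rfl⟩ _ ⟨j, rfl⟩ hij
    exact hrel (hmono.lt_iff_lt.1 hij)

lemma exists_sdiff_Iio_subset_sdiff_Iio {I I' : Set ℕ} (h : (I' \ I).Finite) (m : ℕ) :
    ∃ m' : ℕ, I' \ {k | k < m'} ⊆ I \ {k | k < m} := by
  obtain ⟨b, hb⟩ := h.bddAbove
  refine ⟨max m (b + 1), fun x ⟨hxI', hx⟩ => ?_⟩
  simp only [Set.mem_ofPred_eq, not_lt, max_le_iff] at hx
  have hxI : x ∈ I := by_contra fun hxI => by have := hb ⟨hxI', hxI⟩; omega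
  exact ⟨hxI, by simpa using hx.1⟩

theorem stmt19_general (A : ℕ → Set ℕ) (hfin : ∀ n, (A n).Finite) :
    OpenDense {I : Set ℕ | I.Infinite ∧ ∃ m : ℕ, NiceDissection A (I \ {k | k < m})} := by
  refine ⟨fun I hI => hI.1, fun B hB => ?_, ?_⟩
  · obtain ⟨I, hIB, hI, hND⟩ := exists_infinite_subset_niceDissection hfin hB
    exact ⟨I, ⟨hI, 0, hND.subset Set.sdiff_subset⟩, hIB⟩
  · rintro I ⟨-, m, hND⟩ I' hI' hdiff
    obtain ⟨m', hm'⟩ := exists_sdiff_Iio_subset_sdiff_Iio hdiff m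
    exact ⟨hI', m', hND.subset hm'⟩

/-- For every open dense family `𝒰 ⊆ [ω]^ω` and every sequence `(A n)` of
finite subsets of `ω`, the family
`𝒰' = {I ∈ [ω]^ω : ∃ m, (A n) admits a nice dissection over I \ m}` is open dense. -/
theorem stmt19 (𝒰 : Set (Set ℕ)) (h𝒰 : OpenDense 𝒰)
    (A : ℕ → Set ℕ) (hfin : ∀ n, (A n).Finite) :
    OpenDense {I : Set ℕ | I.Infinite ∧ ∃ m : ℕ, NiceDissection A (I \ {k | k < m})} :=
  stmt19_general A hfin
end
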